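/- arXiv:1806.10824 — 2 statements merged into one kernel-verified Lean document; each statement's English description precedes it below -/
import Mathlib

section
/- There is an absolute constant c such that for every natural number n ≥ 4 with binary digits ε_j(n), the function H_n^{(21)}(t) := Σ_{j=2}^{|n|} ε_j(n) (D_{2^j}(t)/n(j-1)) Π_{s=j+1}^{|n|} ρ_s(t)^{ε_s(n)} satisfies ∫_0^1 |H_n^{(21)}(t)| dt ≤ c·|n|. -/
open MeasureTheory Finset Filter Set

noncomputable section

/-- `k`-th binary digit of `x ∈ [0,1)`. -/
def xdigit (k : ℕ) (x : ℝ) : ℕ := ⌊x * 2 ^ (k + 1)⌋.toNat % 2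

/-- Rademacher function `ρ_k(x) = (-1)^{x_k}`. -/
def rademacher (k : ℕ) (x : ℝ) : ℝ := (-1 : ℝ) ^ xdigit k x

/-- `j`-th binary digit of the natural number `n`. -/
def eps (j n : ℕ) : ℕ := n / 2 ^ j % 2

/-- Walsh-Paley function `w_n(x) = ∏_k ρ_k(x)^{n_k}`. -/
def walsh (n : ℕ) (x : ℝ) : ℝ := ∏ k ∈ Finset.range (n + 1), rademacher k x ^ eps k n

/-- Walsh-Dirichlet kernel `D_n(x) = ∑_{m<n} w_m(x)`. -/
def Dker (n : ℕ) (x : ℝ) : ℝ := ∑ m ∈ Finset.range n, walsh m x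

/-- `l_m = ∑_{k=1}^{m-1} 1/k`. -/
def lsum (m : ℕ) : ℝ := ∑ k ∈ Finset.Ico 1 m, (1 : ℝ) / k

/-- Logarithmic variation `V_L(n)`; note `n(k-1) = n % 2^k`. -/
def VL (n : ℕ) : ℝ :=
  (1 / (Nat.log 2 n : ℝ)) *
    ∑ k ∈ Finset.Icc 1 (Nat.log 2 n),
      |(eps k n : ℝ) - (eps (k + 1) n : ℝ)| * lsum (n % 2 ^ k)

/-!
Paley's lemma: on `[0, 1)` the Walsh–Dirichlet kernel `D_{2^j} = ∏_{k<j} (1 + ρ_k)` equals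
`2^j` times the indicator of `[0, 2^{-j})`, so `‖D_{2^j}‖_{L^1} = 1`. The Rademacher factors
have modulus one and `ε_j(n) / n(j-1) ≤ 1`, so every summand of `H_n^{(21)}` is dominated by
`|D_{2^j}|`, and the triangle inequality gives `‖H_n^{(21)}‖_{L^1} ≤ |n| - 1`.
-/

lemma eps_of_lt {j n : ℕ} (h : n < 2 ^ j) : eps j n = 0 := by
  rw [eps, Nat.div_eq_of_lt h, Nat.zero_mod]

lemma eps_le_one (j n : ℕ) : eps j n ≤ 1 :=
  Nat.lt_succ_iff.mp (Nat.mod_lt _ two_pos)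

lemma eps_two_pow_add_of_lt {j k : ℕ} (hk : k < j) (m : ℕ) :
    eps k (2 ^ j + m) = eps k m := by
  obtain ⟨d, hd⟩ : 2 ∣ 2 ^ (j - k) := dvd_pow_self 2 (by omega)
  have hsplit : 2 ^ j + m = m + 2 ^ (j - k) * 2 ^ k := by
    rw [← pow_add, Nat.sub_add_cancel hk.le, add_comm]
  rw [eps, eps, hsplit, Nat.add_mul_div_right _ _ (by positivity), hd]
  omega

lemma eps_two_pow_add_self {j m : ℕ} (hm : m < 2 ^ j) : eps j (2 ^ j + m) = 1 := by
  rw [eps, add_comm, Nat.add_div_right _ (by positivity), Nat.div_eq_of_lt hm]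

lemma abs_rademacher (k : ℕ) (x : ℝ) : |rademacher k x| = 1 := by
  rw [rademacher, abs_pow, abs_neg, abs_one, one_pow]

lemma abs_prod_rademacher_pow (s : Finset ℕ) (e : ℕ → ℕ) (x : ℝ) :
    |∏ k ∈ s, rademacher k x ^ e k| = 1 := by
  rw [Finset.abs_prod]
  exact Finset.prod_eq_one fun k _ => by rw [abs_pow, abs_rademacher, one_pow]

lemma walsh_eq_prod_range {n N : ℕ} (h : n < 2 ^ N) (x : ℝ) :
    walsh n x = ∏ k ∈ Finset.range N, rademacher k x ^ eps k n := by
  have trivial_factor : ∀ k, n < 2 ^ k → rademacher k x ^ eps k n = 1 := fun k hk => by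
    rw [eps_of_lt hk, pow_zero]
  rcases le_total (n + 1) N with hle | hle
  · refine Finset.prod_subset (Finset.range_subset_range.mpr hle) fun k _ hk => ?_
    exact trivial_factor k (Nat.lt_two_pow_self.trans_le
      (Nat.pow_le_pow_right two_pos (by simp at hk; omega)))
  · refine (Finset.prod_subset (Finset.range_subset_range.mpr hle) fun k _ hk => ?_).symm
    exact trivial_factor k (h.trans_le (Nat.pow_le_pow_right two_pos (by simpa using hk)))

lemma walsh_two_pow_add {j m : ℕ} (hm : m < 2 ^ j) (x : ℝ) :
    walsh (2 ^ j + m) x = walsh m x * rademacher j x := by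
  have hlt : 2 ^ j + m < 2 ^ (j + 1) := by rw [pow_succ]; omega
  rw [walsh_eq_prod_range hlt,
    walsh_eq_prod_range (hm.trans_le (Nat.pow_le_pow_right two_pos j.le_succ)),
    Finset.prod_range_succ, Finset.prod_range_succ, eps_two_pow_add_self hm, eps_of_lt hm,
    pow_one, pow_zero, mul_one]
  congr 1
  exact Finset.prod_congr rfl fun k hk => by
    rw [eps_two_pow_add_of_lt (Finset.mem_range.mp hk) m]

lemma Dker_two_pow (j : ℕ) (x : ℝ) :
    Dker (2 ^ j) x = ∏ k ∈ Finset.range j, (1 + rademacher k x) := by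
  induction j with
  | zero => simp [Dker, walsh, eps]
  | succ j ih =>
    have upper_half : ∑ m ∈ Finset.range (2 ^ j), walsh (2 ^ j + m) x =
        Dker (2 ^ j) x * rademacher j x := by
      rw [Dker, Finset.sum_mul]
      exact Finset.sum_congr rfl fun m hm => walsh_two_pow_add (Finset.mem_range.mp hm) x
    rw [Finset.prod_range_succ, ← ih, Dker, pow_succ, mul_two, Finset.sum_range_add,
      upper_half, Dker]
    ring

lemma rademacher_of_lt_one {x : ℝ} (hx : 0 ≤ x) {j : ℕ} (h : x * 2 ^ (j + 1) < 1) :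
    rademacher j x = 1 := by
  have hfloor : ⌊x * 2 ^ (j + 1)⌋ = 0 := Int.floor_eq_zero_iff.mpr ⟨by positivity, h⟩
  simp [rademacher, xdigit, hfloor]

lemma rademacher_of_one_le {x : ℝ} {j : ℕ} (h₁ : 1 ≤ x * 2 ^ (j + 1))
    (h₂ : x * 2 ^ (j + 1) < 2) :
    rademacher j x = -1 := by
  have hfloor : ⌊x * 2 ^ (j + 1)⌋ = 1 := by
    rw [Int.floor_eq_iff]
    push_cast
    exact ⟨h₁, by linarith⟩
  simp [rademacher, xdigit, hfloor]

lemma prod_one_add_rademacher {x : ℝ} (hx : x ∈ Set.Ico (0 : ℝ) 1) (j : ℕ) :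
    ∏ k ∈ Finset.range j, (1 + rademacher k x) = if x * 2 ^ j < 1 then 2 ^ j else 0 := by
  induction j with
  | zero => simp [hx.2]
  | succ j ih =>
    have hpow : x * 2 ^ (j + 1) = 2 * (x * 2 ^ j) := by ring
    rw [Finset.prod_range_succ, ih]
    by_cases hj : x * 2 ^ j < 1
    · by_cases hj' : x * 2 ^ (j + 1) < 1
      · rw [if_pos hj, if_pos hj', rademacher_of_lt_one hx.1 hj', pow_succ]
        ring
      · rw [if_pos hj, if_neg hj',
          rademacher_of_one_le (not_lt.mp hj') (by rw [hpow]; linarith)]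
        ring
    · have hj' : ¬ x * 2 ^ (j + 1) < 1 := by rw [hpow]; linarith
      rw [if_neg hj, if_neg hj', zero_mul]

lemma Dker_two_pow_eq_indicator {x : ℝ} (hx : x ∈ Set.Ico (0 : ℝ) 1) (j : ℕ) :
    Dker (2 ^ j) x = Set.indicator (Set.Ico 0 ((2 : ℝ) ^ j)⁻¹) (fun _ => 2 ^ j) x := by
  have hlt : x < ((2 : ℝ) ^ j)⁻¹ ↔ x * 2 ^ j < 1 := by
    rw [← one_div, lt_div_iff₀ (by positivity)]
  rw [Dker_two_pow, prod_one_add_rademacher hx, Set.indicator_apply]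
  simp only [Set.mem_Ico, hx.1, true_and, hlt]

lemma integral_abs_Dker_two_pow (j : ℕ) :
    ∫ t in Set.Ico (0 : ℝ) 1, |Dker (2 ^ j) t| = 1 := by
  have hpos : (0 : ℝ) < 2 ^ j := by positivity
  have habs : ∀ x ∈ Set.Ico (0 : ℝ) 1, |Dker (2 ^ j) x| =
      Set.indicator (Set.Ico 0 ((2 : ℝ) ^ j)⁻¹) (fun _ => 2 ^ j) x := fun x hx => by
    rw [Dker_two_pow_eq_indicator hx, Set.indicator_apply]
    split_ifs
    exacts [abs_of_pos hpos, abs_zero]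
  rw [setIntegral_congr_fun measurableSet_Ico habs, setIntegral_indicator measurableSet_Ico,
    Set.Ico_inter_Ico, max_self, min_eq_right (inv_le_one_of_one_le₀ (one_le_pow₀ one_le_two)),
    setIntegral_const, measureReal_def, Real.volume_Ico, sub_zero,
    ENNReal.toReal_ofReal (by positivity), smul_eq_mul, inv_mul_cancel₀ hpos.ne']

lemma integrableOn_abs_Dker_two_pow (j : ℕ) :
    IntegrableOn (fun t => |Dker (2 ^ j) t|) (Set.Ico (0 : ℝ) 1) :=
  Integrable.of_integral_ne_zero (by rw [integral_abs_Dker_two_pow]; exact one_ne_zero)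

-- The case `m = 0`, where the paper's quotient is undefined, is covered by `x / 0 = 0`.
lemma abs_eps_div_le_one (j n m : ℕ) : |(eps j n : ℝ) / m| ≤ 1 := by
  rcases Nat.eq_zero_or_pos m with rfl | hm
  · simp
  · rw [abs_div, Nat.abs_cast, Nat.abs_cast, div_le_one (by exact_mod_cast hm)]
    exact_mod_cast (eps_le_one j n).trans hm

lemma abs_eps_mul_Dker_div_mul_prod_le (n j m : ℕ) (s : Finset ℕ) (t : ℝ) :
    |(eps j n : ℝ) * Dker (2 ^ j) t / m * ∏ k ∈ s, rademacher k t ^ eps k n| ≤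
      |Dker (2 ^ j) t| := by
  rw [abs_mul, abs_prod_rademacher_pow, mul_one, mul_div_right_comm, abs_mul]
  exact mul_le_of_le_one_left (abs_nonneg _) (abs_eps_div_le_one j n m)

/-- `‖H_n^{(21)}‖_{L^1} ≤ c |n|`, where
`H_n^{(21)}(t) = ∑_{j=2}^{|n|} ε_j(n) (D_{2^j}(t)/n(j-1)) ∏_{s=j+1}^{|n|} ρ_s(t)^{ε_s(n)}`
and `n(j-1) = n % 2^j`. -/
theorem statement4 :
    ∃ c > (0 : ℝ), ∀ n : ℕ, 4 ≤ n →
      (∫ t in Set.Ico (0 : ℝ) 1,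
        |∑ j ∈ Finset.Icc 2 (Nat.log 2 n),
          (eps j n : ℝ) * Dker (2 ^ j) t / ((n % 2 ^ j : ℕ) : ℝ) *
            ∏ s ∈ Finset.Icc (j + 1) (Nat.log 2 n), rademacher s t ^ eps s n|)
        ≤ c * (Nat.log 2 n : ℝ) := by
  refine ⟨1, one_pos, fun n _ => ?_⟩
  set L := Nat.log 2 n
  calc (∫ t in Set.Ico (0 : ℝ) 1, |∑ j ∈ Finset.Icc 2 L,
          (eps j n : ℝ) * Dker (2 ^ j) t / ((n % 2 ^ j : ℕ) : ℝ) *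
            ∏ s ∈ Finset.Icc (j + 1) L, rademacher s t ^ eps s n|)
      ≤ ∫ t in Set.Ico (0 : ℝ) 1, ∑ j ∈ Finset.Icc 2 L, |Dker (2 ^ j) t| := by
        refine integral_mono_of_nonneg (ae_of_all _ fun _ => abs_nonneg _)
          (integrable_finsetSum _ fun j _ => integrableOn_abs_Dker_two_pow j)
          (ae_of_all _ fun t => ?_)
        exact (Finset.abs_sum_le_sum_abs _ _).trans
          (Finset.sum_le_sum fun j _ => abs_eps_mul_Dker_div_mul_prod_le n j _ _ t)
    _ = (Finset.Icc 2 L).card := by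
        rw [integral_finsetSum _ fun j _ => integrableOn_abs_Dker_two_pow j]
        simp only [integral_abs_Dker_two_pow, Finset.sum_const, nsmul_eq_mul, mul_one]
    _ ≤ 1 * (L : ℝ) := by
        rw [one_mul, Nat.card_Icc]
        exact_mod_cast (by omega : L + 1 - 2 ≤ L)
end
end

section
/- For the sequence n_A := 2^A − 1 (A ≥ 2): the quantity (1/|n_A|) Σ_{k=1}^{|n_A|} ε_k(n_A) l_{n_A(k-1)} tends to infinity as A → ∞, while V_L(n_A) = (1/|n_A|) Σ_{k=1}^{|n_A|} |ε_k(n_A) − ε_{k+1}(n_A)| l_{n_A(k-1)} is bounded (in fact V_L(n_A) = l_{2^{A-1}-1}/(A-1)). -/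
/-!
For `n = 2 ^ A - 1` all binary digits below `A` equal `1`, so `n(k-1) = 2 ^ k - 1` for every
`k ≤ A - 1`. Memic's sum therefore collects `l_{2^k - 1} ≥ (k - 1) log 2` for every such `k` and
grows quadratically in `A`, while in `V_L` only the top digit differs from its successor, leaving
the single term `l_{2^{A-1} - 1} ≤ 1 + (A - 1) log 2`. Both bounds are the harmonic-number bounds
`log m ≤ l_m ≤ 1 + log m`.
-/

open MeasureTheory Finset Filter Set

noncomputable section

def memicMean (n : ℕ) : ℝ :=
  (1 / (Nat.log 2 n : ℝ)) *
    ∑ k ∈ Icc 1 (Nat.log 2 n), (eps k n : ℝ) * lsum (n % 2 ^ k)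

lemma eps_eq_ite_testBit (j n : ℕ) : eps j n = if n.testBit j then 1 else 0 := by
  rw [Nat.testBit_eq_decide_div_mod_eq, eps]
  rcases Nat.mod_two_eq_zero_or_one (n / 2 ^ j) with h | h <;> simp [h]

lemma eps_two_pow_sub_one (j A : ℕ) : eps j (2 ^ A - 1) = if j < A then 1 else 0 := by
  simp [eps_eq_ite_testBit, Nat.testBit_two_pow_sub_one]

lemma two_pow_sub_one_mod_two_pow {k A : ℕ} (h : k ≤ A) : (2 ^ A - 1) % 2 ^ k = 2 ^ k - 1 :=
  Nat.eq_of_testBit_eq fun i => by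
    simp only [Nat.testBit_mod_two_pow, Nat.testBit_two_pow_sub_one]
    grind

lemma log_two_two_pow_sub_one (A : ℕ) : Nat.log 2 (2 ^ A - 1) = A - 1 := by
  rcases A with _ | _ | A
  · simp
  · simp
  · rw [Nat.log_eq_iff (by simp), Nat.add_sub_cancel, pow_succ 2 (A + 1)]
    have := Nat.one_le_two_pow (n := A)
    constructor <;> omega

lemma lsum_succ (m : ℕ) : lsum (m + 1) = harmonic m := by
  simp [lsum, harmonic_eq_sum_Icc, Finset.Ico_add_one_right_eq_Icc]

lemma log_le_lsum (m : ℕ) : Real.log m ≤ lsum m := by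
  rcases m with _ | m
  · simp [lsum]
  · exact lsum_succ m ▸ log_add_one_le_harmonic m

lemma lsum_le_one_add_log (m : ℕ) : lsum m ≤ 1 + Real.log m := by
  rcases m with _ | m
  · simp [lsum]
  · rw [lsum_succ]
    refine (harmonic_le_one_add_log m).trans ?_
    rcases m with _ | m
    · simp
    · gcongr
      simp

lemma memicMean_two_pow_sub_one (A : ℕ) :
    memicMean (2 ^ A - 1) = (∑ k ∈ Icc 1 (A - 1), lsum (2 ^ k - 1)) / (A - 1 : ℕ) := by
  rw [memicMean, log_two_two_pow_sub_one, one_div_mul_eq_div]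
  congr 1
  refine sum_congr rfl fun k hk => ?_
  rw [Finset.mem_Icc] at hk
  rw [eps_two_pow_sub_one, if_pos (by omega), two_pow_sub_one_mod_two_pow (by omega)]
  simp

lemma VL_two_pow_sub_one (A : ℕ) :
    VL (2 ^ A - 1) = lsum (2 ^ (A - 1) - 1) / (A - 1 : ℕ) := by
  rw [VL, log_two_two_pow_sub_one, one_div_mul_eq_div]
  congr 1
  rcases Nat.eq_zero_or_pos (A - 1) with hA | hA
  · simp [hA, lsum]
  -- only the leading digit `k = A - 1` differs from the next one
  rw [sum_eq_single_of_mem (A - 1) (Finset.mem_Icc.2 ⟨hA, le_rfl⟩)]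
  · rw [eps_two_pow_sub_one, eps_two_pow_sub_one, if_pos (by omega), if_neg (by omega),
      two_pow_sub_one_mod_two_pow (by omega)]
    simp
  · intro k hk hne
    rw [Finset.mem_Icc] at hk
    rw [eps_two_pow_sub_one, eps_two_pow_sub_one, if_pos (by omega), if_pos (by omega)]
    simp

lemma sum_Icc_natCast_sub_one (m : ℕ) : ∑ k ∈ Icc 1 m, ((k : ℝ) - 1) = m * (m - 1) / 2 := by
  induction m with
  | zero => simp
  | succ m ih =>
    rw [sum_Icc_succ_top (by omega), ih]
    push_cast
    ring

lemma sub_one_mul_log_two_le_lsum (k : ℕ) : ((k : ℝ) - 1) * Real.log 2 ≤ lsum (2 ^ k - 1) := by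
  rcases k with _ | k
  · simp [lsum, Real.log_nonneg]
  · calc ((k + 1 : ℕ) - 1 : ℝ) * Real.log 2 = Real.log (2 ^ k : ℕ) := by
          push_cast
          rw [Real.log_pow]
          ring
      _ ≤ Real.log (2 ^ (k + 1) - 1 : ℕ) := by
          gcongr
          · rw [pow_succ]
            have := Nat.one_le_two_pow (n := k)
            omega
      _ ≤ lsum (2 ^ (k + 1) - 1) := log_le_lsum _

lemma log_two_mul_sub_one_div_two_le_sum_lsum_div (m : ℕ) (hm : m ≠ 0) :
    Real.log 2 * ((m : ℝ) - 1) / 2 ≤ (∑ k ∈ Icc 1 m, lsum (2 ^ k - 1)) / m := by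
  have hm' : (0 : ℝ) < m := by positivity
  rw [le_div_iff₀ hm']
  calc Real.log 2 * ((m : ℝ) - 1) / 2 * m = ∑ k ∈ Icc 1 m, ((k : ℝ) - 1) * Real.log 2 := by
        rw [← sum_mul, sum_Icc_natCast_sub_one]
        ring
    _ ≤ ∑ k ∈ Icc 1 m, lsum (2 ^ k - 1) := sum_le_sum fun k _ => sub_one_mul_log_two_le_lsum k

lemma lsum_two_pow_sub_one_div_le (m : ℕ) : lsum (2 ^ m - 1) / m ≤ 1 + Real.log 2 := by
  rcases Nat.eq_zero_or_pos m with rfl | hm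
  · simp only [CharP.cast_eq_zero, div_zero]
    positivity
  have hm' : (1 : ℝ) ≤ m := by exact_mod_cast hm
  rw [div_le_iff₀ (by positivity)]
  calc lsum (2 ^ m - 1) ≤ 1 + Real.log (2 ^ m - 1 : ℕ) := lsum_le_one_add_log _
    _ ≤ 1 + Real.log (2 ^ m : ℕ) := by
        gcongr
        · have := Nat.one_lt_two_pow hm.ne'
          exact_mod_cast (by omega : 0 < 2 ^ m - 1)
        · exact Nat.sub_le _ _
    _ = 1 + m * Real.log 2 := by
        push_cast
        rw [Real.log_pow]
    _ ≤ (1 + Real.log 2) * m := by linarith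

/-- for `n_A = 2^A - 1`, Memic's quantity tends to infinity while
`V_L(n_A) = l_{2^{A-1}-1}/(A-1)` is bounded. -/
theorem statement11 :
    Filter.Tendsto
      (fun A : ℕ =>
        (1 / (Nat.log 2 (2 ^ A - 1) : ℝ)) *
          ∑ k ∈ Finset.Icc 1 (Nat.log 2 (2 ^ A - 1)),
            (eps k (2 ^ A - 1) : ℝ) * lsum ((2 ^ A - 1) % 2 ^ k))
      Filter.atTop Filter.atTop ∧
    (∀ A : ℕ, 2 ≤ A → VL (2 ^ A - 1) = lsum (2 ^ (A - 1) - 1) / ((A : ℝ) - 1)) ∧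
    (∃ C : ℝ, ∀ A : ℕ, VL (2 ^ A - 1) ≤ C) := by
  refine ⟨?_, fun A hA => ?_, 1 + Real.log 2, fun A => ?_⟩
  · show Tendsto (fun A => memicMean (2 ^ A - 1)) atTop atTop
    simp_rw [memicMean_two_pow_sub_one]
    refine Tendsto.comp (g := fun m : ℕ => (∑ k ∈ Icc 1 m, lsum (2 ^ k - 1)) / m) ?_
      (tendsto_sub_atTop_nat 1)
    have hlin : Tendsto (fun m : ℕ => Real.log 2 * ((m : ℝ) - 1) / 2) atTop atTop :=
      ((tendsto_natCast_atTop_atTop.atTop_add tendsto_const_nhds).const_mul_atTop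
        (Real.log_pos one_lt_two)).atTop_div_const two_pos
    refine tendsto_atTop_mono' atTop ?_ hlin
    filter_upwards [eventually_ne_atTop 0] with m hm
    exact log_two_mul_sub_one_div_two_le_sum_lsum_div m hm
  · rw [VL_two_pow_sub_one, Nat.cast_sub (by omega), Nat.cast_one]
  · rw [VL_two_pow_sub_one]
    exact lsum_two_pow_sub_one_div_le _
end
end
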